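/- Let P be a problem. Then P admits preservation of 1 immunity if and only if P admits preservation of ω immunities. -/

import Mathlib

open Classical in
/-- The characteristic function of a set of naturals. -/
noncomputable def chi (A : Set ℕ) : ℕ → ℕ := fun n => if n ∈ A then 1 else 0

/-- The effective join (Turing join) of two sets of naturals:
`X ⊕ Y = {2n : n ∈ X} ∪ {2n+1 : n ∈ Y}`. -/
def setJoin (A B : Set ℕ) : Set ℕ :=
  {n | (∃ m ∈ A, n = 2 * m) ∨ (∃ m ∈ B, n = 2 * m + 1)}

/-- The graph of a function `f : ℕ → ℕ`, coded as a set of naturals. -/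
def funGraph (f : ℕ → ℕ) : Set ℕ := {m | ∃ n, m = Nat.pair n (f n)}

/-- Partial recursiveness relative to an oracle `g : ℕ → ℕ` (oracle computability). -/
inductive RecursiveInFn (g : ℕ → ℕ) : (ℕ →. ℕ) → Prop
  | zero : RecursiveInFn g (pure 0)
  | succ : RecursiveInFn g Nat.succ
  | left : RecursiveInFn g fun n => (Nat.unpair n).1
  | right : RecursiveInFn g fun n => (Nat.unpair n).2
  | oracle : RecursiveInFn g g
  | pair {f h : ℕ →. ℕ} : RecursiveInFn g f → RecursiveInFn g h →
      RecursiveInFn g fun n => Nat.pair <$> f n <*> h n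
  | comp {f h : ℕ →. ℕ} : RecursiveInFn g f → RecursiveInFn g h →
      RecursiveInFn g fun n => h n >>= f
  | prec {f h : ℕ →. ℕ} : RecursiveInFn g f → RecursiveInFn g h →
      RecursiveInFn g (Nat.unpaired fun a n =>
        n.rec (f a) fun y IH => do {let i ← IH; h (Nat.pair a (Nat.pair y i))})
  | rfind {f : ℕ →. ℕ} : RecursiveInFn g f →
      RecursiveInFn g fun a => Nat.rfind fun n => (fun m => m = 0) <$> f (Nat.pair a n)

/-- Turing reducibility between sets of naturals. -/
noncomputable def TuringRed (A B : Set ℕ) : Prop := RecursiveInFn (chi B) (chi A)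

/-- `A` is `Σ⁰₁(Z)` (i.e. `Z`-c.e.): `A` is the domain of a partial `Z`-computable function. -/
noncomputable def SigmaOneIn (Z A : Set ℕ) : Prop :=
  ∃ f : ℕ →. ℕ, RecursiveInFn (chi Z) f ∧ A = f.Dom

/-- `g` dominates `f` if `g n ≥ f n` for every `n`. -/
def Dominates (g f : ℕ → ℕ) : Prop := ∀ n, f n ≤ g n

/-- `f` is `Z`-hyperimmune: no `Z`-computable function dominates `f`. -/
noncomputable def HyperimmuneIn (Z : Set ℕ) (f : ℕ → ℕ) : Prop :=
  ∀ g : ℕ → ℕ, RecursiveInFn (chi Z) g → ¬ Dominates g f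

/-- `A` is `Δ⁰₂(G)`: `A` is limit computable relative to `G`. -/
noncomputable def DeltaTwoIn (G A : Set ℕ) : Prop :=
  ∃ h : ℕ → ℕ, RecursiveInFn (chi G) h ∧ ∀ x, ∃ s₀, ∀ s ≥ s₀, h (Nat.pair x s) = chi A x

/-- `A` is c.e. (`Σ⁰₁`). -/
noncomputable def CESet (A : Set ℕ) : Prop := SigmaOneIn ∅ A

/-- `A` is `Δ⁰₂` (limit computable). -/
noncomputable def DeltaTwo (A : Set ℕ) : Prop := DeltaTwoIn ∅ A

/-- `A` is `Z`-immune: `A` is infinite and contains no infinite `Z`-computable subset. -/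
noncomputable def ImmuneIn (Z A : Set ℕ) : Prop :=
  A.Infinite ∧ ∀ B : Set ℕ, TuringRed B Z → B.Infinite → ¬ B ⊆ A

/-- `A` is `Z`-hyperimmune as a set: its principal function is `Z`-hyperimmune. -/
noncomputable def HyperimmuneSetIn (Z A : Set ℕ) : Prop :=
  A.Infinite ∧ HyperimmuneIn Z (Nat.nth (· ∈ A))

/-- Enumeration reducibility, with finite sets coded by binary representation
(`m ∈ D_u ↔ Nat.testBit u m`). -/
noncomputable def EnumRed (B A : Set ℕ) : Prop :=
  ∃ W : Set ℕ, CESet W ∧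
    ∀ n, n ∈ B ↔ ∃ u, Nat.pair n u ∈ W ∧ ∀ m, Nat.testBit u m = true → m ∈ A

/-- `B` is cototal: `B ≤ₑ ℕ \ B`. -/
noncomputable def Cototal (B : Set ℕ) : Prop := EnumRed B Bᶜ

/-- `X` is semi-computable: there is a computable selector function. -/
noncomputable def SemiComputable (X : Set ℕ) : Prop :=
  ∃ g : ℕ → ℕ, RecursiveInFn (chi ∅) g ∧
    ∀ x y : ℕ, (g (Nat.pair x y) = x ∨ g (Nat.pair x y) = y) ∧
      ((x ∈ X ∨ y ∈ X) → g (Nat.pair x y) ∈ X)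

/-- A problem: a set of instances, and a solution relation between instances and solutions.
Instances and solutions are coded by sets of naturals. -/
structure Problem where
  Inst : Set (Set ℕ)
  Sol : Set ℕ → Set ℕ → Prop

/-- `P` admits preservation of `W`. -/
noncomputable def Preserves (P : Problem) (W : Set (Set ℕ)) : Prop :=
  ∀ Z ∈ W, ∀ X ∈ P.Inst, TuringRed X Z → ∃ Y, P.Sol X Y ∧ setJoin Z Y ∈ W

/-- `P` admits strong preservation of `W`. -/
noncomputable def StronglyPreserves (P : Problem) (W : Set (Set ℕ)) : Prop :=
  ∀ Z ∈ W, ∀ X ∈ P.Inst, ∃ Y, P.Sol X Y ∧ setJoin Z Y ∈ W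

/-- `W` is downward closed under Turing reducibility. -/
noncomputable def DownwardClosed (W : Set (Set ℕ)) : Prop :=
  ∀ X ∈ W, ∀ Y : Set ℕ, TuringRed Y X → Y ∈ W

/-- A Turing ideal: closed under effective join and downward closed under `≤_T`. -/
noncomputable def TuringIdeal (S : Set (Set ℕ)) : Prop :=
  (∀ X ∈ S, ∀ Y ∈ S, setJoin X Y ∈ S) ∧ DownwardClosed S

/-- `P` holds in `S`: every instance of `P` in `S` has a solution in `S`. -/
def HoldsIn (P : Problem) (S : Set (Set ℕ)) : Prop :=
  ∀ X ∈ P.Inst, X ∈ S → ∃ Y, P.Sol X Y ∧ Y ∈ S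

/-- `P` admits avoidance of `k` cones (`k ≤ ω`, with `ω` represented by `⊤ : ℕ∞`). -/
noncomputable def AvoidsCones (P : Problem) (k : ℕ∞) : Prop :=
  ∀ Z : Set ℕ, ∀ B : ℕ → Set ℕ, (∀ s : ℕ, (s : ℕ∞) < k → ¬ TuringRed (B s) Z) →
    ∀ X ∈ P.Inst, TuringRed X Z →
      ∃ Y, P.Sol X Y ∧ ∀ s : ℕ, (s : ℕ∞) < k → ¬ TuringRed (B s) (setJoin Z Y)

/-- `P` admits non-relativized avoidance of `k` cones. -/
noncomputable def NRAvoidsCones (P : Problem) (k : ℕ∞) : Prop :=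
  ∀ B : ℕ → Set ℕ, (∀ s : ℕ, (s : ℕ∞) < k → ¬ TuringRed (B s) ∅) →
    ∀ X ∈ P.Inst, TuringRed X ∅ →
      ∃ Y, P.Sol X Y ∧ ∀ s : ℕ, (s : ℕ∞) < k → ¬ TuringRed (B s) Y

/-- `P` admits preservation of `k` non-`Σ⁰₁` definitions. -/
noncomputable def PreservesNonSigmaOne (P : Problem) (k : ℕ∞) : Prop :=
  ∀ Z : Set ℕ, ∀ B : ℕ → Set ℕ, (∀ s : ℕ, (s : ℕ∞) < k → ¬ SigmaOneIn Z (B s)) →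
    ∀ X ∈ P.Inst, TuringRed X Z →
      ∃ Y, P.Sol X Y ∧ ∀ s : ℕ, (s : ℕ∞) < k → ¬ SigmaOneIn (setJoin Z Y) (B s)

/-- `P` admits preservation of `k` hyperimmunities. -/
noncomputable def PreservesHyperimmunities (P : Problem) (k : ℕ∞) : Prop :=
  ∀ Z : Set ℕ, ∀ f : ℕ → (ℕ → ℕ), (∀ s : ℕ, (s : ℕ∞) < k → HyperimmuneIn Z (f s)) →
    ∀ X ∈ P.Inst, TuringRed X Z →
      ∃ Y, P.Sol X Y ∧ ∀ s : ℕ, (s : ℕ∞) < k → HyperimmuneIn (setJoin Z Y) (f s)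

/-- `P` admits preservation of `k` immunities. -/
noncomputable def PreservesImmunities (P : Problem) (k : ℕ∞) : Prop :=
  ∀ Z : Set ℕ, ∀ B : ℕ → Set ℕ, (∀ s : ℕ, (s : ℕ∞) < k → ImmuneIn Z (B s)) →
    ∀ X ∈ P.Inst, TuringRed X Z →
      ∃ Y, P.Sol X Y ∧ ∀ s : ℕ, (s : ℕ∞) < k → ImmuneIn (setJoin Z Y) (B s)

/-- Coding a point of Cantor space as a function `ℕ → ℕ`. -/
def boolFun (X : ℕ → Bool) : ℕ → ℕ := fun n => cond (X n) 1 0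

/-- `F` is a trace of the closed set `C ⊆ 2^ω`: each `F n` is a set of binary strings of
length `n`, one of which is a prefix of a member of `C`. -/
def IsTrace (C : Set (ℕ → Bool)) (F : ℕ → Finset (List Bool)) : Prop :=
  ∀ n, (∀ σ ∈ F n, σ.length = n) ∧ ∃ σ ∈ F n, ∃ X ∈ C, σ = (List.range n).map X

/-- `C ⊆ 2^ω` has a `Z`-computable constant-bound trace. -/
noncomputable def HasCBTraceIn (Z : Set ℕ) (C : Set (ℕ → Bool)) : Prop :=
  ∃ (F : ℕ → Finset (List Bool)) (k : ℕ), IsTrace C F ∧ (∀ n, (F n).card = k) ∧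
    RecursiveInFn (chi Z) (fun n => Encodable.encode (F n) : ℕ → ℕ)

open Classical in
/-- The real `0.B` with binary expansion given by `B`. -/
noncomputable def realOf (B : Set ℕ) : ℝ :=
  ∑' n : ℕ, if n ∈ B then ((2 : ℝ) ^ (n + 1))⁻¹ else 0

/-- A c.e. set of rationals: the image of a c.e. set of naturals under the
canonical enumeration of `ℚ`. -/
noncomputable def CERatSet (W : Set ℚ) : Prop :=
  ∃ S : Set ℕ, CESet S ∧ W = (fun n => Denumerable.ofNat ℚ n) '' S


/-! Countably many `Z`-immune sets `B s` are merged into the single set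
`C = {⟨s, n⟩ : n ∈ B s, f s ≤ n}`. If some `B s` has an infinite `G`-computable subset, moving
it into column `s` above `f s` gives an infinite `G`-computable subset of `C`; so `G`-immunity of
`C` yields that of every `B s`. Conversely `C` is `Z`-immune: a `Z`-computable subset of `C`
with an infinite column gives one of some `B s`, while the countably many `Z`-computable sets
with only finite columns are defeated by the thresholds `f`: the `e`-th of them loses one
element lying in a column `≥ e`, so each `f s` only has finitely many sets to defeat. -/

namespace RecursiveInFn

variable {g : ℕ → ℕ}

theorem of_partrec {f : ℕ →. ℕ} (h : Nat.Partrec f) : RecursiveInFn g f := by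
  induction h with
  | zero => exact .zero
  | succ => exact .succ
  | left => exact .left
  | right => exact .right
  | pair _ _ hf hh => exact .pair hf hh
  | comp _ _ hf hh => exact .comp hf hh
  | prec _ _ hf hh => exact .prec hf hh
  | rfind _ hf => exact .rfind hf

theorem of_computable {f : ℕ → ℕ} (h : Computable f) : RecursiveInFn g f :=
  of_partrec (Partrec.nat_iff.mp h)

theorem comp_total {f h : ℕ → ℕ} (hf : RecursiveInFn g f) (hh : RecursiveInFn g h) :
    RecursiveInFn g (f ∘ h : ℕ → ℕ) := by
  have e : (fun n => (h n : Part ℕ) >>= (f : ℕ →. ℕ)) = ((f ∘ h : ℕ → ℕ) : ℕ →. ℕ) := by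
    funext n
    exact Part.bind_some _ _
  exact e ▸ hf.comp hh

theorem pair_total {f h : ℕ → ℕ} (hf : RecursiveInFn g f) (hh : RecursiveInFn g h) :
    RecursiveInFn g (fun n => Nat.pair (f n) (h n) : ℕ → ℕ) := by
  have e : (fun n => Nat.pair <$> (f n : Part ℕ) <*> (h n : Part ℕ)) =
      ((fun n => Nat.pair (f n) (h n) : ℕ → ℕ) : ℕ →. ℕ) := by
    funext n
    simp [Seq.seq]
  exact e ▸ hf.pair hh

end RecursiveInFn

inductive OracleCode
  | zero | succ | left | right | oracle
  | pair : OracleCode → OracleCode → OracleCode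
  | comp : OracleCode → OracleCode → OracleCode
  | prec : OracleCode → OracleCode → OracleCode
  | rfind : OracleCode → OracleCode
  deriving Countable

def OracleCode.eval (g : ℕ → ℕ) : OracleCode → ℕ →. ℕ
  | .zero => pure 0
  | .succ => Nat.succ
  | .left => fun n => (Nat.unpair n).1
  | .right => fun n => (Nat.unpair n).2
  | .oracle => g
  | .pair a b => fun n => Nat.pair <$> eval g a n <*> eval g b n
  | .comp a b => fun n => eval g b n >>= eval g a
  | .prec a b => Nat.unpaired fun x n =>
      n.rec (eval g a x) fun y IH => do {let i ← IH; eval g b (Nat.pair x (Nat.pair y i))}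
  | .rfind a => fun x => Nat.rfind fun n => (fun m => m = 0) <$> eval g a (Nat.pair x n)

theorem RecursiveInFn.exists_oracleCode {g : ℕ → ℕ} {f : ℕ →. ℕ} (h : RecursiveInFn g f) :
    ∃ c : OracleCode, c.eval g = f := by
  induction h with
  | zero => exact ⟨.zero, rfl⟩
  | succ => exact ⟨.succ, rfl⟩
  | left => exact ⟨.left, rfl⟩
  | right => exact ⟨.right, rfl⟩
  | oracle => exact ⟨.oracle, rfl⟩
  | pair _ _ ih₁ ih₂ =>
    obtain ⟨c₁, rfl⟩ := ih₁; obtain ⟨c₂, rfl⟩ := ih₂; exact ⟨.pair c₁ c₂, rfl⟩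
  | comp _ _ ih₁ ih₂ =>
    obtain ⟨c₁, rfl⟩ := ih₁; obtain ⟨c₂, rfl⟩ := ih₂; exact ⟨.comp c₁ c₂, rfl⟩
  | prec _ _ ih₁ ih₂ =>
    obtain ⟨c₁, rfl⟩ := ih₁; obtain ⟨c₂, rfl⟩ := ih₂; exact ⟨.prec c₁ c₂, rfl⟩
  | rfind _ ih₁ =>
    obtain ⟨c₁, rfl⟩ := ih₁; exact ⟨.rfind c₁, rfl⟩

theorem countable_setOf_recursiveInFn (g : ℕ → ℕ) : {f : ℕ →. ℕ | RecursiveInFn g f}.Countable :=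
  (Set.countable_range (OracleCode.eval g)).mono fun _ hf => hf.exists_oracleCode

theorem chi_injective : Function.Injective chi := by
  intro A B h
  ext n
  have hn := congrFun h n
  by_cases hA : n ∈ A <;> by_cases hB : n ∈ B <;> simp_all [chi]

theorem countable_setOf_turingRed (Z : Set ℕ) : {A : Set ℕ | TuringRed A Z}.Countable :=
  (countable_setOf_recursiveInFn (chi Z)).preimage (PFun.lift_injective.comp chi_injective)

theorem turingRed_setOf_and_mem {W G : Set ℕ} (hW : TuringRed W G) {p : ℕ → Prop}
    [DecidablePred p] (hp : PrimrecPred p) {f : ℕ → ℕ} (hf : Primrec f) :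
    TuringRed {m | p m ∧ f m ∈ W} G := by
  set q : ℕ → ℕ := fun k => if p k.unpair.1 then k.unpair.2 else 0
  have hq : Primrec q :=
    Primrec.ite (hp.comp (Primrec.fst.comp Primrec.unpair)) (Primrec.snd.comp Primrec.unpair)
      (Primrec.const 0)
  have e : chi {m | p m ∧ f m ∈ W} = q ∘ fun m => Nat.pair m (chi W (f m)) := by
    funext m
    by_cases h1 : p m <;> by_cases h2 : f m ∈ W <;> simp [q, chi, h1, h2]
  unfold TuringRed
  rw [e]
  exact (RecursiveInFn.of_computable hq.to_comp).comp_total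
    ((RecursiveInFn.of_computable Computable.id).pair_total
      (hW.comp_total (RecursiveInFn.of_computable hf.to_comp)))

def column (W : Set ℕ) (s : ℕ) : Set ℕ := {n | Nat.pair s n ∈ W}

theorem turingRed_column {W G : Set ℕ} (hW : TuringRed W G) (s : ℕ) :
    TuringRed (column W s) G := by
  simpa [column] using turingRed_setOf_and_mem hW (p := fun _ => True) ⟨_, Primrec.const true⟩
    (Primrec₂.natPair.comp (Primrec.const s) Primrec.id)

theorem exists_mem_le_fst_of_finite_columns {W : Set ℕ} (hW : W.Infinite)
    (hcol : ∀ s, (column W s).Finite) (K : ℕ) : ∃ m ∈ W, K ≤ m.unpair.1 := by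
  by_contra! h
  refine hW (((Finset.range K).finite_toSet.biUnion fun s _ => (hcol s).image (Nat.pair s)).subset
    fun m hm => Set.mem_iUnion₂.mpr ⟨m.unpair.1, Finset.mem_range.mpr (h m hm), m.unpair.2, ?_,
      Nat.pair_unpair m⟩)
  simpa [column] using hm

theorem exists_threshold {𝒲 : Set (Set ℕ)} (h𝒲 : 𝒲.Countable) :
    ∃ f : ℕ → ℕ, ∀ W ∈ 𝒲, W.Infinite → (∀ s, (column W s).Finite) →
      ∃ m ∈ W, m.unpair.2 < f m.unpair.1 := by
  obtain ⟨V, hV⟩ := (h𝒲.insert ∅).exists_eq_range (Set.insert_nonempty _ _)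
  have hpick : ∀ e, ∃ m, (V e).Infinite → (∀ s, (column (V e) s).Finite) →
      m ∈ V e ∧ e ≤ m.unpair.1 := by
    intro e
    by_cases h : (V e).Infinite ∧ ∀ s, (column (V e) s).Finite
    · obtain ⟨m, hm, he⟩ := exists_mem_le_fst_of_finite_columns h.1 h.2 e
      exact ⟨m, fun _ _ => ⟨hm, he⟩⟩
    · exact ⟨0, fun h₁ h₂ => absurd ⟨h₁, h₂⟩ h⟩
  choose p hp using hpick
  refine ⟨fun s => (Finset.range (s + 1)).sup (fun e => (p e).unpair.2) + 1, ?_⟩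
  intro W hW hinf hcol
  obtain ⟨e, rfl⟩ : W ∈ Set.range V := hV ▸ Set.mem_insert_of_mem ∅ hW
  obtain ⟨hpe, he⟩ := hp e hinf hcol
  refine ⟨p e, hpe, Nat.lt_succ_of_le ?_⟩
  exact Finset.le_sup (f := fun e => (p e).unpair.2) (Finset.mem_range.mpr (Nat.lt_succ_of_le he))

def thinnedJoin (B : ℕ → Set ℕ) (f : ℕ → ℕ) : Set ℕ :=
  {m | m.unpair.2 ∈ B m.unpair.1 ∧ f m.unpair.1 ≤ m.unpair.2}

def columnTail (s c : ℕ) (W : Set ℕ) : Set ℕ :=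
  {m | (m.unpair.1 = s ∧ c ≤ m.unpair.2) ∧ m.unpair.2 ∈ W}

theorem turingRed_columnTail {W G : Set ℕ} (hW : TuringRed W G) (s c : ℕ) :
    TuringRed (columnTail s c W) G :=
  turingRed_setOf_and_mem hW
    (PrimrecPred.and (Primrec.eq.comp (Primrec.fst.comp Primrec.unpair) (Primrec.const s))
      (Primrec.nat_le.comp (Primrec.const c) (Primrec.snd.comp Primrec.unpair)))
    (Primrec.snd.comp Primrec.unpair)

theorem Set.Infinite.columnTail {W : Set ℕ} (hW : W.Infinite) (s c : ℕ) :
    (columnTail s c W).Infinite := by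
  refine ((hW.sdiff (Set.finite_lt_nat c)).image
    (Set.injOn_of_injective (f := Nat.pair s) fun _ _ h => (Nat.pair_eq_pair.mp h).2)).mono ?_
  rintro _ ⟨n, ⟨hn, hc⟩, rfl⟩
  simp_all [_root_.columnTail]

theorem columnTail_subset_thinnedJoin {B : ℕ → Set ℕ} {W : Set ℕ} (f : ℕ → ℕ) {s : ℕ}
    (hW : W ⊆ B s) : columnTail s (f s) W ⊆ thinnedJoin B f := by
  rintro m ⟨⟨rfl, hc⟩, hm⟩
  exact ⟨hW hm, hc⟩

theorem immuneIn_thinnedJoin {Z : Set ℕ} {B : ℕ → Set ℕ} (hB : ∀ s, ImmuneIn Z (B s)) {f : ℕ → ℕ}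
    (hf : ∀ W, TuringRed W Z → W.Infinite → (∀ s, (column W s).Finite) →
      ∃ m ∈ W, m.unpair.2 < f m.unpair.1) :
    ImmuneIn Z (thinnedJoin B f) := by
  refine ⟨((hB 0).1.columnTail 0 (f 0)).mono (columnTail_subset_thinnedJoin f subset_rfl), ?_⟩
  intro W hWZ hW hWC
  by_cases hcol : ∀ s, (column W s).Finite
  · obtain ⟨m, hm, hlt⟩ := hf W hWZ hW hcol
    exact absurd (hWC hm).2 (not_le.mpr hlt)
  · obtain ⟨s, hs⟩ := not_forall.mp hcol
    refine (hB s).2 _ (turingRed_column hWZ s) hs fun n hn => ?_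
    simpa using (hWC hn).1

theorem ImmuneIn.of_thinnedJoin {G : Set ℕ} {B : ℕ → Set ℕ} {f : ℕ → ℕ}
    (hC : ImmuneIn G (thinnedJoin B f)) {s : ℕ} (hB : (B s).Infinite) : ImmuneIn G (B s) :=
  ⟨hB, fun _ hWG hW hWB => hC.2 _ (turingRed_columnTail hWG s (f s)) (hW.columnTail s (f s))
    (columnTail_subset_thinnedJoin f hWB)⟩

/-- Preservation of 1 immunity is equivalent to preservation of
ω immunities. -/
theorem stmt18 (P : Problem) : PreservesImmunities P 1 ↔ PreservesImmunities P ⊤ := by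
  constructor
  · intro H Z B hB X hX hXZ
    have hB' : ∀ s, ImmuneIn Z (B s) := fun s => hB s (ENat.natCast_lt_top s)
    obtain ⟨f, hf⟩ := exists_threshold (countable_setOf_turingRed Z)
    obtain ⟨Y, hY, hC⟩ := H Z (fun _ => thinnedJoin B f)
      (fun _ _ => immuneIn_thinnedJoin hB' hf) X hX hXZ
    exact ⟨Y, hY, fun s _ => (hC 0 zero_lt_one).of_thinnedJoin (hB' s).1⟩
  · intro H Z B hB X hX hXZ
    obtain ⟨Y, hY, hB0⟩ := H Z (fun _ => B 0) (fun _ _ => hB 0 zero_lt_one) X hX hXZ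
    refine ⟨Y, hY, fun s hs => ?_⟩
    obtain rfl : s = 0 := Nat.lt_one_iff.mp (by exact_mod_cast hs)
    exact hB0 0 (ENat.natCast_lt_top 0)
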